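/- arXiv:1302.5020 — 3 statements merged into one kernel-verified Lean document; each statement's English description precedes it below -/
import Mathlib

section
/- Let d ≥ 1, let π ∈ NC(d), and let 0 ≤ k ≤ d+1. Then wt_k(π) · wt_{d+1−k}(α(π)) = x^{d+1} in ℚ[x]. -/
open Finset Polynomial
open scoped BigOperators

/-- The cyclic successor of `a` on `{1, …, d}`: `d ⊕ 1 = 1`. -/
def cyc (d a : ℕ) : ℕ := if a = d then 1 else a + 1

/-- The cyclic interval `[k, l]` of `{1, …, d}`; it is wrapped when `k > l`. -/
def cyclicInterval (d k l : ℕ) : Finset ℕ :=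
  if k ≤ l then Finset.Icc k l else Finset.Icc k d ∪ Finset.Icc 1 l

/-- `P` is a set partition of `{1, …, d}`, given as its finite set of blocks. -/
def IsPartitionOf (d : ℕ) (P : Finset (Finset ℕ)) : Prop :=
  (∀ B ∈ P, B ⊆ Finset.Icc 1 d ∧ B.Nonempty) ∧
    ∀ x ∈ Finset.Icc 1 d, ∃! B, B ∈ P ∧ x ∈ B

/-- `P` is noncrossing: there are no `a < b < c < e` with `a, c` in one block and
`b, e` in a different block. -/
def Noncrossing (P : Finset (Finset ℕ)) : Prop :=
  ∀ B₁ ∈ P, ∀ B₂ ∈ P, ∀ a b c e : ℕ,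
    a < b → b < c → c < e → a ∈ B₁ → c ∈ B₁ → b ∈ B₂ → e ∈ B₂ → B₁ = B₂

/-- `P` is a noncrossing set partition of `{1, …, d}`. -/
def IsNC (d : ℕ) (P : Finset (Finset ℕ)) : Prop :=
  IsPartitionOf d P ∧ Noncrossing P

open scoped Classical in
/-- The finite set `NC(d)` of noncrossing partitions of `{1, …, d}`. -/
noncomputable def NCd (d : ℕ) : Finset (Finset (Finset ℕ)) :=
  ((Finset.Icc 1 d).powerset.powerset).filter fun P => IsNC d P

/-- `block(π)`: the number of nonsingleton blocks. -/
def blockCount (P : Finset (Finset ℕ)) : ℕ :=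
  (P.filter fun B => 2 ≤ B.card).card

/-- The number of singleton blocks of `P` contained in `U`. -/
def singIn (P : Finset (Finset ℕ)) (U : Finset ℕ) : ℕ :=
  (P.filter fun B => B.card = 1 ∧ B ⊆ U).card

open scoped Classical in
/-- The number of `a ∈ A` that are antisingletons of `P`, i.e. such that `a` and its cyclic
successor lie in the same block of `P`.  Here `A` is the set of starting points of the
internal adjacencies of a family of cyclic intervals. -/
noncomputable def antiIn (d : ℕ) (P : Finset (Finset ℕ)) (A : Finset ℕ) : ℕ :=
  (A.filter fun a => ∃ B ∈ P, a ∈ B ∧ cyc d a ∈ B).card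

/-- The weight `wt_S(π) = x^(block(π) + sing_S(π) + anti_S(π))`, where the family `S`
is recorded by the union `U` of its intervals and the set `A` of starting points of its
internal adjacencies. -/
noncomputable def wt (d : ℕ) (P : Finset (Finset ℕ)) (U A : Finset ℕ) : Polynomial ℚ :=
  X ^ (blockCount P + singIn P U + antiIn d P A)

/-- Four elements of `ZMod n` occur in this cyclic order. -/
def cyclicOrdered (n : ℕ) (a b c e : ZMod n) : Prop :=
  ∃ r : ZMod n, (a - r).val < (b - r).val ∧ (b - r).val < (c - r).val ∧ (c - r).val < (e - r).val

/-- Two blocks on the cycle `ZMod n` cross. -/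
def crosses (n : ℕ) (A B : Finset (ZMod n)) : Prop :=
  ∃ a ∈ A, ∃ c ∈ A, ∃ b ∈ B, ∃ e ∈ B, cyclicOrdered n a b c e

/-- The embedding of `[d]` into the `2d`-cycle: `i ↦ 2i - 1`. -/
def embOrig (d i : ℕ) : ZMod (2 * d) := ((2 * i - 1 : ℕ) : ZMod (2 * d))

/-- The embedding of the copy `[d]'` into the `2d`-cycle: `i' ↦ 2(d - i) mod 2d`. -/
def embCopy (d i : ℕ) : ZMod (2 * d) := ((2 * (d - i) : ℕ) : ZMod (2 * d))

/-- The blocks of `P` (embedded via `embOrig`) together with the blocks of `Q`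
(embedded via `embCopy`) form a noncrossing partition of the `2d`-cycle. -/
def SUCompat (d : ℕ) (P Q : Finset (Finset ℕ)) : Prop :=
  (∀ B₁ ∈ P, ∀ B₂ ∈ P, B₁ ≠ B₂ →
      ¬ crosses (2 * d) (B₁.image (embOrig d)) (B₂.image (embOrig d))) ∧
  (∀ B₁ ∈ Q, ∀ B₂ ∈ Q, B₁ ≠ B₂ →
      ¬ crosses (2 * d) (B₁.image (embCopy d)) (B₂.image (embCopy d))) ∧
  ∀ B₁ ∈ P, ∀ B₂ ∈ Q, ¬ crosses (2 * d) (B₁.image (embOrig d)) (B₂.image (embCopy d))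

/-- `P` refines into `Q`: every block of `P` is contained in a block of `Q`. -/
def refines (P Q : Finset (Finset ℕ)) : Prop :=
  ∀ B ∈ P, ∃ B' ∈ Q, B ⊆ B'

/-- `Q` is the Simion–Ullman complement `α(P)`: it is a partition of `{1, …, d}`
(the copy `[d]'` being identified with `[d]`), the blocks of `P` and `Q` together form a
noncrossing partition of the `2d`-cycle, and `Q` is the coarsest such partition. -/
def IsSUComplement (d : ℕ) (P Q : Finset (Finset ℕ)) : Prop :=
  IsPartitionOf d Q ∧ SUCompat d P Q ∧
    ∀ R, IsPartitionOf d R → SUCompat d P R → refines R Q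

/-- The toric `g`-polynomial of the `j`-dimensional cube:
`g_j(x) = Σ_{m=0}^{⌊j/2⌋} Catalan(j-m)·binom(j-m, m)·(x-1)^m`. -/
noncomputable def gPoly (j : ℕ) : Polynomial ℚ :=
  ∑ m ∈ Finset.range (j / 2 + 1),
    (C ((catalan (j - m) * (j - m).choose m : ℕ) : ℚ)) * (X - 1) ^ m

/-- The polynomial `Q_{d,k}(x)`, `0 ≤ k ≤ d+1`. -/
noncomputable def Qpoly (d k : ℕ) : Polynomial ℚ :=
  if k = 0 then
    (X - 1) ^ (d + 1) +
      ∑ j ∈ Finset.range (d + 1),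
        (C ((2 ^ (d - j) * d.choose j : ℕ) : ℚ)) * (X - 1) ^ (d - j) * gPoly j
  else if k ≤ d then
    ∑ j ∈ Finset.Icc (k - 1) d,
      (C ((2 ^ (d - j) * ((d - k).choose (d - j) + (d + 1 - k).choose (d - j)) : ℕ) : ℚ)) *
        (X - 1) ^ (d - j) * gPoly j
  else gPoly d

/-- The polynomial `C_{d,i,j}(x) = Σ_{k=j+1}^{i+j} (1/2)^i binom(i-1, k-1-j) Q_{d,k}(x)`. -/
noncomputable def Cpoly (d i j : ℕ) : Polynomial ℚ :=
  ∑ k ∈ Finset.Icc (j + 1) (i + j),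
    (C ((1 / 2 : ℚ) ^ i * ((i - 1).choose (k - 1 - j) : ℚ))) * Qpoly d k

/-- `wt_k(π)`: for `1 ≤ k ≤ d` the weight w.r.t. `S = {[k,d]}`; for `k = 0` the weight
w.r.t. the full circle `[1,d]^*`; for `k = d+1` the weight w.r.t. `S = ∅`. -/
noncomputable def wtk (d k : ℕ) (P : Finset (Finset ℕ)) : Polynomial ℚ :=
  if k = 0 then wt d P (Finset.Icc 1 d) (Finset.Icc 1 d)
  else if k ≤ d then wt d P (Finset.Icc k d) (Finset.Icc k d \ {d})
  else wt d P ∅ ∅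

/-- The `t`-th left endpoint of a family of cyclic intervals given as a list of pairs. -/
def nthK (L : List (ℕ × ℕ)) (t : ℕ) : ℕ := (L.getD t (0, 0)).1

/-- The `t`-th right endpoint of a family of cyclic intervals given as a list of pairs. -/
def nthL (L : List (ℕ × ℕ)) (t : ℕ) : ℕ := (L.getD t (0, 0)).2

/-- The list `[(k₁,l₁),…,(k_i,l_i)]` is a family of pairwise disjoint cyclic intervals of
`[d]` in standard form: `1 ≤ k₁ ≤ l₁ < k₂ ≤ l₂ < … < k_i ≤ d`, and either
`k_i ≤ l_i ≤ d` or `1 ≤ l_i < k₁` (only the last interval may be wrapped). -/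
def StandardForm (d : ℕ) (L : List (ℕ × ℕ)) : Prop :=
  L ≠ [] ∧ 1 ≤ nthK L 0 ∧ nthK L (L.length - 1) ≤ d ∧
  (∀ t, t + 1 < L.length → nthK L t ≤ nthL L t ∧ nthL L t < nthK L (t + 1)) ∧
  ((nthK L (L.length - 1) ≤ nthL L (L.length - 1) ∧ nthL L (L.length - 1) ≤ d) ∨
    (1 ≤ nthL L (L.length - 1) ∧ nthL L (L.length - 1) < nthK L 0))

/-- The dual family `S'` of a standard-form family
`S = [(k₁,l₁),…,(k_i,l_i)]`, namely
`S' = [(d-k_i+1, d-l_{i-1}), …, (d-k₂+1, d-l₁), (d-k₁+1, d-l_i)]`,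
where endpoints are taken in `{1, …, d}` cyclically (so `d - l` means `d` when `l = d`). -/
def dualFam (d : ℕ) (L : List (ℕ × ℕ)) : List (ℕ × ℕ) :=
  (List.range L.length).map fun t =>
    (d - nthK L (L.length - 1 - t) + 1,
     d - (nthL L ((2 * L.length - 2 - t) % L.length)) % d)

/-- A (generalized) family of cyclic intervals of `[d]`: the empty family `∅`, the full
circle `[1,d]^*`, or a finite list of cyclic intervals. -/
inductive Fam where
  | empty : Fam
  | full : Fam
  | fam (L : List (ℕ × ℕ)) : Fam

/-- The union of the intervals of a generalized family. -/
def famU (d : ℕ) : Fam → Finset ℕ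
  | Fam.empty => ∅
  | Fam.full => Finset.Icc 1 d
  | Fam.fam L => L.foldr (fun p acc => cyclicInterval d p.1 p.2 ∪ acc) ∅

/-- The set of starting points of internal adjacencies of a generalized family. -/
def famAdj (d : ℕ) : Fam → Finset ℕ
  | Fam.empty => ∅
  | Fam.full => Finset.Icc 1 d
  | Fam.fam L => L.foldr (fun p acc => (cyclicInterval d p.1 p.2 \ {p.2}) ∪ acc) ∅

/-- The dual `S'` of a generalized family `S`, with `∅' = [1,d]^*` and `([1,d]^*)' = ∅`. -/
def famDual (d : ℕ) : Fam → Fam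
  | Fam.empty => Fam.full
  | Fam.full => Fam.empty
  | Fam.fam L => Fam.fam (dualFam d L)

/-- The generalized family is in standard form (`∅` and `[1,d]^*` always are). -/
def FamStd (d : ℕ) : Fam → Prop
  | Fam.empty => True
  | Fam.full => True
  | Fam.fam L => StandardForm d L

/-- `binom(n, r)` for an integer lower entry `r`, which is `0` whenever `r < 0`. -/
def chooseZ (n : ℕ) (r : ℤ) : ℕ := if 0 ≤ r then n.choose r.toNat else 0

-- ===== auxiliary development =====


def fm (n r t : ℕ) : ℕ := if r ≤ t then t - r else t + (n - r)
def natBtw (n p t q : ℕ) : Prop := 0 < fm n p t ∧ fm n p t < fm n p q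

lemma fm_comp (n : ℕ) {u a b : ℕ} (hu : u < n) (ha : a < n) (hb : b < n) :
    fm n a b = fm n (fm n u a) (fm n u b) := by
  unfold fm; split_ifs <;> omega

lemma fm_lt {n r t : ℕ} (hr : r < n) (ht : t < n) : fm n r t < n := by
  unfold fm; split_ifs <;> omega

lemma fm_pos {n r t : ℕ} (hr : r < n) (ht : t < n) (h : r ≠ t) : 0 < fm n r t := by
  unfold fm; split_ifs <;> omega

lemma fm_inj {n r a b : ℕ} (hr : r < n) (ha : a < n) (hb : b < n)
    (h : fm n r a = fm n r b) : a = b := by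
  unfold fm at h; split_ifs at h <;> omega

lemma fm_self (n r : ℕ) : fm n r r = 0 := by unfold fm; simp

lemma natBtw_coord {n p a w b : ℕ} (hp : p < n) (ha : a < n) (hw : w < n) (hb : b < n) :
    natBtw n a w b ↔ natBtw n (fm n p a) (fm n p w) (fm n p b) := by
  unfold natBtw; rw [← fm_comp n hp ha hw, ← fm_comp n hp ha hb]

lemma natBtw_zero {n a b : ℕ} : natBtw n 0 a b ↔ 0 < a ∧ a < b := by
  simp [natBtw, fm]

lemma natBtw_to_zero {n a b : ℕ} (ha0 : 0 < a) (han : a < n) :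
    natBtw n a b 0 ↔ a < b ∧ b < n := by
  unfold natBtw fm; split_ifs <;> omega

lemma arith_trans' {n A B S Qc : ℕ} (hA : 0 < A) (hAS : A < S) (hSB : S < B) (hB : B < n)
    (hQ : 0 < Qc) (hQn : Qc < n) (hQA : Qc ≠ A) (hQB : Qc ≠ B) (hQS : Qc ≠ S) :
    (natBtw n 0 A Qc ∧ natBtw n Qc B 0) ∨ (natBtw n Qc A S ∧ natBtw n S B Qc) := by
  unfold natBtw fm; split_ifs <;> omega

def opos (i : ℕ) : ℕ := 2 * i - 1
def cpos (d j : ℕ) : ℕ := 2 * (d - j)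

def sep (d : ℕ) (P : Finset (Finset ℕ)) (p q : ℕ) : Prop :=
  ∃ B ∈ P, ∃ x ∈ B, ∃ y ∈ B, natBtw (2*d) p (opos x) q ∧ natBtw (2*d) q (opos y) p

def rel (d : ℕ) (P : Finset (Finset ℕ)) (j t : ℕ) : Prop := ¬ sep d P (cpos d j) (cpos d t)

lemma sep_symm {d P p q} (h : sep d P p q) : sep d P q p := by
  obtain ⟨B, hB, x, hx, y, hy, h1, h2⟩ := h
  exact ⟨B, hB, y, hy, x, hx, h2, h1⟩

lemma not_sep_self {d P p} : ¬ sep d P p p := by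
  rintro ⟨B, hB, x, hx, y, hy, ⟨h1, h2⟩, -⟩
  unfold fm at h1 h2; split_ifs at h1 h2 <;> omega

lemma rel_refl {d P j} : rel d P j j := not_sep_self

lemma rel_symm {d P j t} (h : rel d P j t) : rel d P t j := fun hs => h (sep_symm hs)

lemma opos_lt {d x : ℕ} (h1 : 1 ≤ x) (h2 : x ≤ d) : opos x < 2*d := by unfold opos; omega
lemma cpos_lt {d j : ℕ} (h1 : 1 ≤ j) (hd : 1 ≤ d) : cpos d j < 2*d := by unfold cpos; omega
lemma cpos_ne_opos {d j x : ℕ} (h1 : 1 ≤ x) : cpos d j ≠ opos x := by unfold cpos opos; omega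
lemma cpos_inj {d j t : ℕ} (hj1 : 1 ≤ j) (hj2 : j ≤ d) (ht1 : 1 ≤ t) (ht2 : t ≤ d)
    (h : cpos d j = cpos d t) : j = t := by unfold cpos at h; omega


lemma natBtw_coord0 {n p w b : ℕ} (hp : p < n) (hw : w < n) (hb : b < n) :
    natBtw n p w b ↔ natBtw n 0 (fm n p w) (fm n p b) := by
  have := natBtw_coord (n := n) (p := p) hp hp hw hb
  rwa [fm_self] at this

lemma rel_trans {d : ℕ} {P : Finset (Finset ℕ)} (hd : 1 ≤ d)
    (hPsub : ∀ B ∈ P, B ⊆ Finset.Icc 1 d) {j t u : ℕ}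
    (hj : 1 ≤ j) (ht : 1 ≤ t) (hu : 1 ≤ u)
    (h1 : rel d P j t) (h2 : rel d P t u) : rel d P j u := by
  intro hsep
  obtain ⟨B, hB, x, hx, y, hy, hx1, hy1⟩ := hsep
  set n := 2*d with hn
  have hxd := Finset.mem_Icc.1 (hPsub B hB hx)
  have hyd := Finset.mem_Icc.1 (hPsub B hB hy)
  set p := cpos d j with hp
  set q := cpos d t with hq
  set s := cpos d u with hs
  have hpn : p < n := cpos_lt hj hd
  have hqn : q < n := cpos_lt ht hd
  have hsn : s < n := cpos_lt hu hd
  have han : opos x < n := opos_lt hxd.1 hxd.2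
  have hbn : opos y < n := opos_lt hyd.1 hyd.2
  by_cases hqp : q = p
  · exact h2 (by rw [show cpos d t = p from hqp]; exact ⟨B, hB, x, hx, y, hy, hx1, hy1⟩)
  by_cases hqs : q = s
  · exact h1 (by rw [show cpos d t = s from hqs]; exact ⟨B, hB, x, hx, y, hy, hx1, hy1⟩)
  set A := fm n p (opos x) with hA
  set Bc := fm n p (opos y) with hBc
  set S := fm n p s with hS
  set Qc := fm n p q with hQc
  have hx1' : 0 < A ∧ A < S := hx1
  have hy1' : natBtw n S Bc 0 := by
    have := natBtw_coord (n := n) (p := p) hpn hsn hbn hpn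
    rw [fm_self] at this
    exact this.1 hy1
  have hSpos : 0 < S := lt_trans hx1'.1 hx1'.2
  have hy1'' : S < Bc ∧ Bc < n := (natBtw_to_zero hSpos (fm_lt hpn hsn)).1 hy1'
  have hQpos : 0 < Qc := fm_pos hpn hqn (fun h => hqp h.symm)
  have hQn : Qc < n := fm_lt hpn hqn
  have hQA : Qc ≠ A := fun h => cpos_ne_opos hxd.1 (fm_inj hpn hqn han h)
  have hQB : Qc ≠ Bc := fun h => cpos_ne_opos hyd.1 (fm_inj hpn hqn hbn h)
  have hQS : Qc ≠ S := fun h => hqs (fm_inj hpn hqn hsn h)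
  rcases arith_trans' hx1'.1 hx1'.2 hy1''.1 hy1''.2 hQpos hQn hQA hQB hQS with
    ⟨c1, c2⟩ | ⟨c1, c2⟩
  · refine h1 ⟨B, hB, x, hx, y, hy, ?_, ?_⟩
    · exact (natBtw_coord0 hpn han hqn).2 c1
    · have := natBtw_coord (n := n) (p := p) hpn hqn hbn hpn
      rw [fm_self] at this
      exact this.2 c2
  · refine h2 ⟨B, hB, x, hx, y, hy, ?_, ?_⟩
    · exact (natBtw_coord hpn hqn han hsn).2 c1
    · exact (natBtw_coord hpn hsn hbn hqn).2 c2


def tau (d a : ℕ) : ℕ := if a = d then d else d - a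

lemma tau_mem {d a : ℕ} (h1 : 1 ≤ a) (h2 : a ≤ d) : 1 ≤ tau d a ∧ tau d a ≤ d := by
  unfold tau; split_ifs <;> omega

lemma tau_tau {d a : ℕ} (h1 : 1 ≤ a) (h2 : a ≤ d) : tau d (tau d a) = a := by
  unfold tau; split_ifs <;> omega

lemma tau_injOn {d a b : ℕ} (ha1 : 1 ≤ a) (ha2 : a ≤ d) (hb1 : 1 ≤ b) (hb2 : b ≤ d)
    (h : tau d a = tau d b) : a = b := by
  unfold tau at h; split_ifs at h <;> omega
-- ===== bridge to ZMod / crosses =====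

lemma val_cast_sub (n r t : ℕ) [NeZero n] (hr : r < n) (ht : t < n) :
    ((t : ZMod n) - (r : ZMod n)).val = fm n r t := by
  have h1 : ((t : ZMod n) - (r : ZMod n)) = ((fm n r t : ℕ) : ZMod n) := by
    unfold fm
    split_ifs with h
    · push_cast [Nat.cast_sub h]; ring
    · push_cast [Nat.cast_sub (le_of_lt hr)]
      rw [ZMod.natCast_self]; ring
  rw [h1, ZMod.val_natCast, Nat.mod_eq_of_lt]
  unfold fm; split_ifs with h <;> omega

lemma cast_val_eq (n : ℕ) [NeZero n] (r : ZMod n) : ((r.val : ℕ) : ZMod n) = r := by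
  rw [ZMod.natCast_val, ZMod.cast_id]

lemma co_iff (n w x y z : ℕ) [NeZero n] (hw : w < n) (hx : x < n) (hy : y < n) (hz : z < n) :
    cyclicOrdered n w x y z ↔
      ∃ r < n, fm n r w < fm n r x ∧ fm n r x < fm n r y ∧ fm n r y < fm n r z := by
  constructor
  · rintro ⟨r, h1, h2, h3⟩
    refine ⟨r.val, r.val_lt, ?_⟩
    rw [← cast_val_eq n r] at h1 h2 h3
    rw [val_cast_sub n r.val w r.val_lt hw] at h1
    rw [val_cast_sub n r.val x r.val_lt hx] at h1 h2
    rw [val_cast_sub n r.val y r.val_lt hy] at h2 h3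
    rw [val_cast_sub n r.val z r.val_lt hz] at h3
    exact ⟨h1, h2, h3⟩
  · rintro ⟨r, hr, h1, h2, h3⟩
    refine ⟨(r : ZMod n), ?_, ?_, ?_⟩ <;>
      rw [val_cast_sub n r _ hr (by omega), val_cast_sub n r _ hr (by omega)] <;> assumption

lemma embOrig_eq (d i : ℕ) : embOrig d i = ((opos i : ℕ) : ZMod (2*d)) := rfl
lemma embCopy_eq (d j : ℕ) : embCopy d j = ((cpos d j : ℕ) : ZMod (2*d)) := rfl

-- encode: from sep-witness pattern to a cyclic order certificate (coordinates, base p)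
lemma arith_encode {n A Qc B : ℕ} (hA : 0 < A) (hAQ : A < Qc) (hQB : Qc < B) (hB : B < n) :
    0 < fm n A Qc ∧ fm n A Qc < fm n A B ∧ fm n A B < fm n A 0 := by
  unfold fm; split_ifs <;> omega

/-- From a separation witness, build a crossing between a P-block and a copy-block. -/
lemma crosses_of_sep {d : ℕ} (hd : 1 ≤ d) {B C : Finset ℕ} {x y j t : ℕ}
    (hx : x ∈ B) (hy : y ∈ B) (hj : j ∈ C) (ht : t ∈ C)
    (hx1 : 1 ≤ x) (hx2 : x ≤ d) (hy1 : 1 ≤ y) (hy2 : y ≤ d)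
    (hj1 : 1 ≤ j) (hj2 : j ≤ d) (ht1 : 1 ≤ t) (ht2 : t ≤ d)
    (h1 : natBtw (2*d) (cpos d j) (opos x) (cpos d t))
    (h2 : natBtw (2*d) (cpos d t) (opos y) (cpos d j)) :
    crosses (2*d) (B.image (embOrig d)) (C.image (embCopy d)) := by
  haveI : NeZero (2*d) := ⟨by omega⟩
  set n := 2*d with hn
  set p := cpos d j
  set q := cpos d t
  have hpn : p < n := cpos_lt hj1 hd
  have hqn : q < n := cpos_lt ht1 hd
  have han : opos x < n := opos_lt hx1 hx2
  have hbn : opos y < n := opos_lt hy1 hy2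
  have hA : 0 < fm n p (opos x) := h1.1
  have hAQ : fm n p (opos x) < fm n p q := h1.2
  have h2' : natBtw n (fm n p q) (fm n p (opos y)) 0 := by
    have := natBtw_coord (n := n) (p := p) hpn hqn hbn hpn
    rw [fm_self] at this; exact this.1 h2
  have hQpos : 0 < fm n p q := lt_trans hA hAQ
  have h2'' := (natBtw_to_zero hQpos (fm_lt hpn hqn)).1 h2'
  refine ⟨embOrig d x, Finset.mem_image_of_mem _ hx, embOrig d y, Finset.mem_image_of_mem _ hy,
    embCopy d t, Finset.mem_image_of_mem _ ht, embCopy d j, Finset.mem_image_of_mem _ hj, ?_⟩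
  rw [embOrig_eq, embOrig_eq, embCopy_eq, embCopy_eq]
  rw [co_iff n (opos x) q (opos y) p han hqn hbn hpn]
  refine ⟨opos x, han, ?_⟩
  rw [fm_comp n hpn han hqn, fm_comp n hpn han hbn, fm_comp n hpn han hpn, fm_comp n hpn han han]
  simp only [fm_self]
  exact arith_encode hA hAQ h2''.1 h2''.2

-- partition helpers
lemma blk_mem_Icc {d : ℕ} {X : Finset (Finset ℕ)} (hX : IsPartitionOf d X)
    {B : Finset ℕ} (hB : B ∈ X) {x : ℕ} (hx : x ∈ B) : 1 ≤ x ∧ x ≤ d := by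
  have := (hX.1 B hB).1 hx
  exact Finset.mem_Icc.1 this

lemma blk_unique {d : ℕ} {X : Finset (Finset ℕ)} (hX : IsPartitionOf d X)
    {B B' : Finset ℕ} (hB : B ∈ X) (hB' : B' ∈ X) {x : ℕ} (hx : x ∈ B) (hx' : x ∈ B') :
    B = B' := by
  have hxd : x ∈ Finset.Icc 1 d := (hX.1 B hB).1 hx
  obtain ⟨C, -, hCu⟩ := hX.2 x hxd
  rw [hCu B ⟨hB, hx⟩, hCu B' ⟨hB', hx'⟩]

lemma blk_exists {d : ℕ} {X : Finset (Finset ℕ)} (hX : IsPartitionOf d X)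
    {x : ℕ} (h1 : 1 ≤ x) (h2 : x ≤ d) : ∃ B ∈ X, x ∈ B := by
  obtain ⟨C, ⟨hC, hxC⟩, -⟩ := hX.2 x (Finset.mem_Icc.2 ⟨h1, h2⟩)
  exact ⟨C, hC, hxC⟩
-- ===== the relation `rel` captures Q-blocks =====

set_option maxHeartbeats 2000000 in
lemma arith_4pt {n U V W Z Ac Bc : ℕ} (hUV : U < V) (hVW : V < W) (hWZ : W < Z) (hZn : Z < n)
    (hAcn : Ac < n) (hBcn : Bc < n) (hBW : Bc ≠ W)
    (h1 : natBtw n U Ac V) (h2 : natBtw n V Bc U) :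
    (natBtw n V Bc Z ∧ natBtw n Z Ac V) ∨ (natBtw n U Ac W ∧ natBtw n W Bc U) := by
  unfold natBtw fm at *; split_ifs at * <;> omega

lemma arith_dec {n A U C W : ℕ} (h1 : A < U) (h2 : U < C) (h3 : C < W) (h4 : W < n) :
    natBtw n U C W ∧ natBtw n W A U := by
  unfold natBtw fm; split_ifs <;> omega

open scoped Classical in
noncomputable def cls (d : ℕ) (P : Finset (Finset ℕ)) (j : ℕ) : Finset ℕ :=
  (Finset.Icc 1 d).filter (fun t => rel d P j t)

open scoped Classical in
noncomputable def clsPart (d : ℕ) (P : Finset (Finset ℕ)) : Finset (Finset ℕ) :=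
  (Finset.Icc 1 d).image (cls d P)

lemma hPsub {d : ℕ} {P : Finset (Finset ℕ)} (hP : IsNC d P) :
    ∀ B ∈ P, B ⊆ Finset.Icc 1 d := fun B hB => (hP.1.1 B hB).1

/-- Two labels in the same Q-block are `rel`-related. -/
lemma rel_of_sameQblock {d : ℕ} {P Q : Finset (Finset ℕ)} (hd : 1 ≤ d) (hP : IsNC d P)
    (hQ : IsSUComplement d P Q) {j t : ℕ} {C : Finset ℕ}
    (hC : C ∈ Q) (hj : j ∈ C) (ht : t ∈ C) : rel d P j t := by
  intro hsep
  obtain ⟨B, hB, x, hx, y, hy, h1, h2⟩ := hsep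
  have hxd := blk_mem_Icc hP.1 hB hx
  have hyd := blk_mem_Icc hP.1 hB hy
  have hjd := blk_mem_Icc hQ.1 hC hj
  have htd := blk_mem_Icc hQ.1 hC ht
  exact hQ.2.1.2.2 B hB C hC
    (crosses_of_sep hd hx hy hj ht hxd.1 hxd.2 hyd.1 hyd.2 hjd.1 hjd.2 htd.1 htd.2 h1 h2)

lemma mem_cls {d : ℕ} {P : Finset (Finset ℕ)} {j t : ℕ} :
    t ∈ cls d P j ↔ (1 ≤ t ∧ t ≤ d) ∧ rel d P j t := by
  unfold cls
  simp [Finset.mem_filter, Finset.mem_Icc]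

lemma cls_eq {d : ℕ} {P : Finset (Finset ℕ)} (hd : 1 ≤ d)
    (hPs : ∀ B ∈ P, B ⊆ Finset.Icc 1 d) {j j' : ℕ} (hj1 : 1 ≤ j)
    (hj1' : 1 ≤ j') (h : rel d P j j') : cls d P j = cls d P j' := by
  ext t
  rw [mem_cls, mem_cls]
  constructor
  · rintro ⟨htd, hr⟩
    exact ⟨htd, rel_trans hd hPs hj1' hj1 htd.1 (rel_symm h) hr⟩
  · rintro ⟨htd, hr⟩
    exact ⟨htd, rel_trans hd hPs hj1 hj1' htd.1 h hr⟩

lemma clsPart_partition {d : ℕ} {P : Finset (Finset ℕ)} (hd : 1 ≤ d)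
    (hPs : ∀ B ∈ P, B ⊆ Finset.Icc 1 d) : IsPartitionOf d (clsPart d P) := by
  constructor
  · intro B hB
    obtain ⟨j, hj, rfl⟩ := Finset.mem_image.1 hB
    constructor
    · intro t ht; exact Finset.mem_Icc.2 ((mem_cls.1 ht).1)
    · exact ⟨j, mem_cls.2 ⟨Finset.mem_Icc.1 hj, rel_refl⟩⟩
  · intro x hx
    have hxd := Finset.mem_Icc.1 hx
    refine ⟨cls d P x, ⟨Finset.mem_image_of_mem _ hx, mem_cls.2 ⟨hxd, rel_refl⟩⟩, ?_⟩
    rintro B ⟨hBR, hxB⟩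
    obtain ⟨j, hj, rfl⟩ := Finset.mem_image.1 hBR
    have hjd := Finset.mem_Icc.1 hj
    exact cls_eq hd hPs hjd.1 hxd.1 (mem_cls.1 hxB).2

/-- `rel`-related labels lie in a common Q-block. -/
lemma sameQblock_of_rel {d : ℕ} {P Q : Finset (Finset ℕ)} (hd : 1 ≤ d) (hP : IsNC d P)
    (hQ : IsSUComplement d P Q) {j t : ℕ} (hj1 : 1 ≤ j) (hj2 : j ≤ d) (ht1 : 1 ≤ t) (ht2 : t ≤ d)
    (h : rel d P j t) : ∃ B ∈ Q, j ∈ B ∧ t ∈ B := by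
  haveI : NeZero (2*d) := ⟨by omega⟩
  set n := 2*d with hn
  have hPs := hPsub hP
  have hcompat : SUCompat d P (clsPart d P) := by
    refine ⟨hQ.2.1.1, ?_, ?_⟩
    · -- classes pairwise noncrossing
      rintro C₁ hC₁ C₂ hC₂ hne hcr
      obtain ⟨j₁, hj₁, rfl⟩ := Finset.mem_image.1 hC₁
      obtain ⟨j₂, hj₂, rfl⟩ := Finset.mem_image.1 hC₂
      have hj₁d := Finset.mem_Icc.1 hj₁
      have hj₂d := Finset.mem_Icc.1 hj₂
      obtain ⟨a, ha, c, hc, b, hb, e, he, hco⟩ := hcr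
      obtain ⟨u, hu, rfl⟩ := Finset.mem_image.1 ha
      obtain ⟨w, hw, rfl⟩ := Finset.mem_image.1 hc
      obtain ⟨v, hv, rfl⟩ := Finset.mem_image.1 hb
      obtain ⟨z, hz, rfl⟩ := Finset.mem_image.1 he
      obtain ⟨hud, hju⟩ := mem_cls.1 hu
      obtain ⟨hwd, hjw⟩ := mem_cls.1 hw
      obtain ⟨hvd, hjv⟩ := mem_cls.1 hv
      obtain ⟨hzd, hjz⟩ := mem_cls.1 hz
      have hun : cpos d u < n := cpos_lt hud.1 hd
      have hvn : cpos d v < n := cpos_lt hvd.1 hd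
      have hwn : cpos d w < n := cpos_lt hwd.1 hd
      have hzn : cpos d z < n := cpos_lt hzd.1 hd
      rw [embCopy_eq, embCopy_eq, embCopy_eq, embCopy_eq,
        co_iff n _ _ _ _ hun hvn hwn hzn] at hco
      obtain ⟨r, hr, o1, o2, o3⟩ := hco
      have hruw : rel d P u w :=
        rel_trans hd hPs hud.1 hj₁d.1 hwd.1 (rel_symm hju) hjw
      have hrvz : rel d P v z :=
        rel_trans hd hPs hvd.1 hj₂d.1 hzd.1 (rel_symm hjv) hjz
      -- show rel u v, contradicting C₁ ≠ C₂
      have hruv : rel d P u v := by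
        rintro ⟨B, hB, x, hx, y, hy, h1, h2⟩
        have hxd := blk_mem_Icc hP.1 hB hx
        have hyd := blk_mem_Icc hP.1 hB hy
        have hxn : opos x < n := opos_lt hxd.1 hxd.2
        have hyn : opos y < n := opos_lt hyd.1 hyd.2
        rw [natBtw_coord hr hun hxn hvn] at h1
        rw [natBtw_coord hr hvn hyn hun] at h2
        have hBW : fm n r (opos y) ≠ fm n r (cpos d w) :=
          fun hh => cpos_ne_opos hyd.1 (fm_inj hr hwn hyn hh.symm)
        rcases arith_4pt o1 o2 o3 (fm_lt hr hzn) (fm_lt hr hxn) (fm_lt hr hyn) hBW h1 h2 with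
          ⟨c1, c2⟩ | ⟨c1, c2⟩
        · exact hrvz ⟨B, hB, y, hy, x, hx,
            (natBtw_coord hr hvn hyn hzn).2 c1, (natBtw_coord hr hzn hxn hvn).2 c2⟩
        · exact hruw ⟨B, hB, x, hx, y, hy,
            (natBtw_coord hr hun hxn hwn).2 c1, (natBtw_coord hr hwn hyn hun).2 c2⟩
      exact hne (cls_eq hd hPs hj₁d.1 hj₂d.1
        (rel_trans hd hPs hj₁d.1 hud.1 hj₂d.1 hju
          (rel_trans hd hPs hud.1 hvd.1 hj₂d.1 hruv (rel_symm hjv))))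
    · -- classes do not cross P-blocks
      rintro B₁ hB₁ C hC hcr
      obtain ⟨j₀, hj₀, rfl⟩ := Finset.mem_image.1 hC
      obtain ⟨a, ha, c, hc, b, hb, e, he, hco⟩ := hcr
      obtain ⟨x, hx, rfl⟩ := Finset.mem_image.1 ha
      obtain ⟨y, hy, rfl⟩ := Finset.mem_image.1 hc
      obtain ⟨u, hu, rfl⟩ := Finset.mem_image.1 hb
      obtain ⟨w, hw, rfl⟩ := Finset.mem_image.1 he
      have hxd := blk_mem_Icc hP.1 hB₁ hx
      have hyd := blk_mem_Icc hP.1 hB₁ hy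
      obtain ⟨hud, hju⟩ := mem_cls.1 hu
      obtain ⟨hwd, hjw⟩ := mem_cls.1 hw
      have hj₀d := Finset.mem_Icc.1 hj₀
      have hxn : opos x < n := opos_lt hxd.1 hxd.2
      have hyn : opos y < n := opos_lt hyd.1 hyd.2
      have hun : cpos d u < n := cpos_lt hud.1 hd
      have hwn : cpos d w < n := cpos_lt hwd.1 hd
      rw [embOrig_eq, embOrig_eq, embCopy_eq, embCopy_eq,
        co_iff n _ _ _ _ hxn hun hyn hwn] at hco
      obtain ⟨r, hr, o1, o2, o3⟩ := hco
      have hruw : rel d P u w :=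
        rel_trans hd hPs hud.1 hj₀d.1 hwd.1 (rel_symm hju) hjw
      obtain ⟨c1, c2⟩ := arith_dec o1 o2 o3 (fm_lt hr hwn)
      exact hruw ⟨B₁, hB₁, y, hy, x, hx,
        (natBtw_coord hr hun hyn hwn).2 c1, (natBtw_coord hr hwn hxn hun).2 c2⟩
  have href := hQ.2.2 (clsPart d P) (clsPart_partition hd hPs) hcompat
  obtain ⟨B', hB', hsub⟩ := href (cls d P j)
    (Finset.mem_image_of_mem _ (Finset.mem_Icc.2 ⟨hj1, hj2⟩))
  exact ⟨B', hB', hsub (mem_cls.2 ⟨⟨hj1, hj2⟩, rel_refl⟩),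
    hsub (mem_cls.2 ⟨⟨ht1, ht2⟩, h⟩)⟩
-- ===== singletons vs antisingletons =====

lemma opos_inj {x y : ℕ} (hx : 1 ≤ x) (hy : 1 ≤ y) (h : opos x = opos y) : x = y := by
  unfold opos at h; omega

lemma cyc_mem {d a : ℕ} (hd : 1 ≤ d) (h1 : 1 ≤ a) (h2 : a ≤ d) :
    1 ≤ cyc d a ∧ cyc d a ≤ d := by unfold cyc; split_ifs <;> omega

-- around a single copy point: the two flanking original points
lemma arithL1a {d a v : ℕ} (hd : 1 ≤ d) (h1 : 1 ≤ a) (h2 : a ≤ d) (hv1 : 1 ≤ v) (hv2 : v ≤ d)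
    (hne : v ≠ tau d a) :
    natBtw (2*d) (cpos d a) (opos v) (cpos d (cyc d a)) := by
  unfold natBtw fm cpos opos tau cyc at *; split_ifs at * <;> omega

lemma arithL1b {d a : ℕ} (hd : 2 ≤ d) (h1 : 1 ≤ a) (h2 : a ≤ d) :
    natBtw (2*d) (cpos d (cyc d a)) (opos (tau d a)) (cpos d a) := by
  unfold natBtw fm cpos opos tau cyc at *; split_ifs at * <;> omega

lemma arithL1c {d a : ℕ} (hd : 1 ≤ d) (h1 : 1 ≤ a) (h2 : a ≤ d) :
    ¬ natBtw (2*d) (cpos d a) (opos (tau d a)) (cpos d (cyc d a)) := by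
  unfold natBtw fm cpos opos tau cyc at *; split_ifs <;> omega

lemma arithL1d {d a y : ℕ} (hd : 1 ≤ d) (h1 : 1 ≤ a) (h2 : a ≤ d) (hy1 : 1 ≤ y) (hy2 : y ≤ d)
    (h : natBtw (2*d) (cpos d (cyc d a)) (opos y) (cpos d a)) : y = tau d a := by
  unfold natBtw fm cpos opos tau cyc at *; split_ifs at * <;> omega

/-- L1: `a` is an antisingleton of `Q` iff `{tau d a}` is a singleton block of `P`. -/
lemma anti_Q_iff_sing_P {d : ℕ} {P Q : Finset (Finset ℕ)} (hd : 1 ≤ d) (hP : IsNC d P)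
    (hQ : IsSUComplement d P Q) {a : ℕ} (h1 : 1 ≤ a) (h2 : a ≤ d) :
    (∃ B ∈ Q, a ∈ B ∧ cyc d a ∈ B) ↔ {tau d a} ∈ P := by
  have hid := tau_mem h1 h2
  have hcd := cyc_mem hd h1 h2
  constructor
  · rintro ⟨C, hC, haC, hcC⟩
    have hrel : rel d P a (cyc d a) := rel_of_sameQblock hd hP hQ hC haC hcC
    obtain ⟨Bi, hBi, hiBi⟩ := blk_exists hP.1 hid.1 hid.2
    have hBsing : ∀ v ∈ Bi, v = tau d a := by
      intro v hvB
      by_contra hne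
      have hvd := blk_mem_Icc hP.1 hBi hvB
      exact hrel ⟨Bi, hBi, v, hvB, tau d a, hiBi,
        arithL1a hd h1 h2 hvd.1 hvd.2 hne, arithL1b (by omega) h1 h2⟩
    have : Bi = {tau d a} := Finset.eq_singleton_iff_unique_mem.2 ⟨hiBi, hBsing⟩
    exact this ▸ hBi
  · intro hsing
    have hrel : rel d P a (cyc d a) := by
      rintro ⟨B, hB, x, hx, y, hy, hb1, hb2⟩
      have hyd := blk_mem_Icc hP.1 hB hy
      have hyi : y = tau d a := arithL1d hd h1 h2 hyd.1 hyd.2 hb2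
      have hBeq : B = {tau d a} :=
        blk_unique hP.1 hB hsing (hyi ▸ hy) (Finset.mem_singleton_self _)
      have hxi : x = tau d a := Finset.mem_singleton.1 (hBeq ▸ hx)
      exact arithL1c hd h1 h2 (hxi ▸ hb1)
    obtain ⟨C, hC, hj, ht⟩ := sameQblock_of_rel hd hP hQ h1 h2 hcd.1 hcd.2 hrel
    exact ⟨C, hC, hj, ht⟩

-- around a single original point
lemma arithL2a {d a t : ℕ} (hd : 1 ≤ d) (h1 : 1 ≤ a) (h2 : a ≤ d) (ht1 : 1 ≤ t) (ht2 : t ≤ d)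
    (hne : t ≠ tau d a) :
    natBtw (2*d) (cpos d (tau d a)) (opos (cyc d a)) (cpos d t) ∧
      natBtw (2*d) (cpos d t) (opos a) (cpos d (tau d a)) := by
  unfold natBtw fm cpos opos tau cyc at *; split_ifs at * <;> omega

lemma arithL2b {d a : ℕ} (hd : 1 ≤ d) (h1 : 1 ≤ a) (h2 : a ≤ d) :
    fm (2*d) (cpos d (tau d a)) (opos (cyc d a)) = 1 := by
  unfold fm cpos opos tau cyc at *; split_ifs at * <;> omega

lemma arithL2c {d a z : ℕ} (hd : 1 ≤ d) (h1 : 1 ≤ a) (h2 : a ≤ d) (hz1 : 1 ≤ z) (hz2 : z ≤ d)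
    (hz : z ≠ a) :
    fm (2*d) (cpos d (tau d a)) (cpos d (tau d z)) =
      fm (2*d) (cpos d (tau d a)) (opos z) + 1 := by
  unfold fm cpos opos tau at *; split_ifs at * <;> omega

/-- L2: `a` is an antisingleton of `P` iff `{tau d a}` is a singleton block of `Q`. -/
lemma anti_P_iff_sing_Q {d : ℕ} {P Q : Finset (Finset ℕ)} (hd : 1 ≤ d) (hP : IsNC d P)
    (hQ : IsSUComplement d P Q) {a : ℕ} (h1 : 1 ≤ a) (h2 : a ≤ d) :
    (∃ B ∈ P, a ∈ B ∧ cyc d a ∈ B) ↔ {tau d a} ∈ Q := by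
  haveI : NeZero (2*d) := ⟨by omega⟩
  set n := 2*d with hn
  have hjd := tau_mem h1 h2
  have hcd := cyc_mem hd h1 h2
  set j := tau d a with hj
  set p := cpos d j with hp
  have hpn : p < n := cpos_lt hjd.1 hd
  constructor
  · rintro ⟨B, hB, haB, hcB⟩
    obtain ⟨C, hC, hjC⟩ := blk_exists hQ.1 hjd.1 hjd.2
    have hCsing : ∀ t ∈ C, t = j := by
      intro t htC
      by_contra hne
      have htd := blk_mem_Icc hQ.1 hC htC
      have hrel : rel d P j t := rel_of_sameQblock hd hP hQ hC hjC htC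
      obtain ⟨w1, w2⟩ := arithL2a hd h1 h2 htd.1 htd.2 hne
      exact hrel ⟨B, hB, cyc d a, hcB, a, haB, w1, w2⟩
    have : C = {j} := Finset.eq_singleton_iff_unique_mem.2 ⟨hjC, hCsing⟩
    exact this ▸ hC
  · intro hsing
    by_contra hxy
    obtain ⟨By, hBy, hyBy⟩ := blk_exists hP.1 hcd.1 hcd.2
    have haBy : a ∉ By := fun haB => hxy ⟨By, hBy, haB, hyBy⟩
    obtain ⟨z, hzBy, hzmax⟩ := Finset.exists_max_image By (fun w => fm n p (opos w)) ⟨_, hyBy⟩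
    have hzd := blk_mem_Icc hP.1 hBy hzBy
    have hza : z ≠ a := fun h => haBy (h ▸ hzBy)
    have hzn : opos z < n := opos_lt hzd.1 hzd.2
    set t := tau d z with htdef
    have htd := tau_mem hzd.1 hzd.2
    set q := cpos d t with hq
    have hqn : q < n := cpos_lt htd.1 hd
    have hfq : fm n p q = fm n p (opos z) + 1 := arithL2c hd h1 h2 hzd.1 hzd.2 hza
    have hczpos : 0 < fm n p (opos z) := fm_pos hpn hzn (cpos_ne_opos hzd.1)
    have htj : t ≠ j := by
      intro h
      have : q = p := by rw [hq, hp, h]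
      rw [this, fm_self] at hfq; omega
    have hyn : opos (cyc d a) < n := opos_lt hcd.1 hcd.2
    have hy1 : fm n p (opos (cyc d a)) = 1 := arithL2b hd h1 h2
    have hrel : rel d P j t := by
      rintro ⟨B'', hB'', u, hu, v, hv, hb1, hb2⟩
      have hud := blk_mem_Icc hP.1 hB'' hu
      have hvd := blk_mem_Icc hP.1 hB'' hv
      have hun : opos u < n := opos_lt hud.1 hud.2
      have hvn : opos v < n := opos_lt hvd.1 hvd.2
      have hqnn : fm n p q < n := fm_lt hpn hqn
      have hb1' : 0 < fm n p (opos u) ∧ fm n p (opos u) < fm n p (opos z) + 1 := by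
        rw [← hfq]; exact hb1
      have hb2' : fm n p (opos z) + 1 < fm n p (opos v) ∧ fm n p (opos v) < n := by
        have hc := (natBtw_coord hpn hqn hvn hpn).1 hb2
        rw [fm_self] at hc
        have := (natBtw_to_zero (by omega : 0 < fm n p q) hqnn).1 hc
        rw [hfq] at this; exact this
      by_cases hBB : B'' = By
      · have := hzmax v (hBB ▸ hv)
        omega
      · rcases Nat.lt_or_ge 1 (fm n p (opos u)) with hgt | hle
        · rcases Nat.lt_or_ge (fm n p (opos u)) (fm n p (opos z)) with hlt | hge
          · -- genuine crossing between By and B''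
            refine hQ.2.1.1 By hBy B'' hB'' (fun h => hBB h.symm)
              ⟨embOrig d (cyc d a), Finset.mem_image_of_mem _ hyBy,
               embOrig d z, Finset.mem_image_of_mem _ hzBy,
               embOrig d u, Finset.mem_image_of_mem _ hu,
               embOrig d v, Finset.mem_image_of_mem _ hv, ?_⟩
            rw [embOrig_eq, embOrig_eq, embOrig_eq, embOrig_eq,
              co_iff n _ _ _ _ hyn hun hzn hvn]
            exact ⟨p, hpn, by omega, by omega, by omega⟩
          · have huz : u = z := opos_inj hud.1 hzd.1 (fm_inj hpn hun hzn (by omega))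
            exact hBB (blk_unique hP.1 hB'' hBy (huz ▸ hu) hzBy)
        · have huy : u = cyc d a := opos_inj hud.1 hcd.1 (fm_inj hpn hun hyn (by omega))
          exact hBB (blk_unique hP.1 hB'' hBy (huy ▸ hu) hyBy)
    obtain ⟨C, hC, hjC, htC⟩ := sameQblock_of_rel hd hP hQ hjd.1 hjd.2 htd.1 htd.2 hrel
    have : C = {j} := blk_unique hQ.1 hC hsing hjC (Finset.mem_singleton_self _)
    exact htj (Finset.mem_singleton.1 (this ▸ htC))
-- ===== counting blocks =====

noncomputable def mxf (B : Finset ℕ) : ℕ := if h : B.Nonempty then B.max' h else 0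
noncomputable def mnf (B : Finset ℕ) : ℕ := if h : B.Nonempty then B.min' h else 0

lemma mxf_mem {B : Finset ℕ} (h : B.Nonempty) : mxf B ∈ B := by
  unfold mxf; rw [dif_pos h]; exact B.max'_mem h

lemma le_mxf {B : Finset ℕ} {x : ℕ} (hx : x ∈ B) : x ≤ mxf B := by
  unfold mxf; rw [dif_pos ⟨x, hx⟩]; exact Finset.le_max' B x hx

lemma mnf_mem {B : Finset ℕ} (h : B.Nonempty) : mnf B ∈ B := by
  unfold mnf; rw [dif_pos h]; exact B.min'_mem h

lemma mnf_le {B : Finset ℕ} {x : ℕ} (hx : x ∈ B) : mnf B ≤ x := by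
  unfold mnf; rw [dif_pos ⟨x, hx⟩]; exact Finset.min'_le B x hx

lemma arithCCa {d mn mx u : ℕ} (hmx : mx < d) (hmn : 1 ≤ mn) (hmm : mn ≤ mx)
    (hu1 : 1 ≤ u) (hu2 : u ≤ d)
    (h : natBtw (2*d) (cpos d (d - mx)) (opos u) (cpos d (d - mn + 1))) :
    ¬(mn ≤ u ∧ u ≤ mx) := by
  unfold natBtw fm cpos opos at h; split_ifs at h <;> omega

lemma arithCCb {d mn mx v : ℕ} (hmx : mx < d) (hmn : 1 ≤ mn) (hmm : mn ≤ mx)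
    (hv1 : 1 ≤ v) (hv2 : v ≤ d)
    (h : natBtw (2*d) (cpos d (d - mn + 1)) (opos v) (cpos d (d - mx))) :
    mn ≤ v ∧ v ≤ mx := by
  unfold natBtw fm cpos opos at h; split_ifs at h <;> omega

/-- The cross-exclusion: no P-block and Q-block map to the same target. -/
lemma cross_ne {d : ℕ} {P Q : Finset (Finset ℕ)} (hd : 1 ≤ d) (hP : IsNC d P)
    (hQ : IsSUComplement d P Q) {B C : Finset ℕ} (hB : B ∈ P) (hC : C ∈ Q) :
    d - mxf B ≠ mxf C := by
  intro h
  have hBne := (hP.1.1 B hB).2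
  have hCne := (hQ.1.1 C hC).2
  have hmxB := blk_mem_Icc hP.1 hB (mxf_mem hBne)
  have hmnB := blk_mem_Icc hP.1 hB (mnf_mem hBne)
  have hmxC := blk_mem_Icc hQ.1 hC (mxf_mem hCne)
  have hmm : mnf B ≤ mxf B := le_mxf (mnf_mem hBne)
  have hmxlt : mxf B < d := by omega
  set jp := mxf C with hjp
  set jq := d - mnf B + 1 with hjq
  have hjpx : jp = d - mxf B := h.symm
  have hrel : rel d P jp jq := by
    rintro ⟨B'', hB'', u, hu, v, hv, h1, h2⟩
    have hud := blk_mem_Icc hP.1 hB'' hu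
    have hvd := blk_mem_Icc hP.1 hB'' hv
    rw [hjpx] at h1 h2
    have hu' := arithCCa hmxlt hmnB.1 hmm hud.1 hud.2 (by rwa [hjq] at h1)
    have hv' := arithCCb hmxlt hmnB.1 hmm hvd.1 hvd.2 (by rwa [hjq] at h2)
    by_cases hBB : B'' = B
    · subst hBB
      exact hu' ⟨mnf_le hu, le_mxf hu⟩
    · have hvmn : v ≠ mnf B := fun hh => hBB (blk_unique hP.1 hB'' hB hv (hh ▸ mnf_mem hBne))
      have hvmx : v ≠ mxf B := fun hh => hBB (blk_unique hP.1 hB'' hB hv (hh ▸ mxf_mem hBne))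
      rcases Nat.lt_or_ge u (mnf B) with hcase | hcase
      · exact hBB (hP.2 B'' hB'' B hB u (mnf B) v (mxf B) hcase (by omega) (by omega)
          hu hv (mnf_mem hBne) (mxf_mem hBne))
      · have hugt : mxf B < u := by omega
        exact hBB ((hP.2 B hB B'' hB'' (mnf B) v (mxf B) u (by omega) (by omega) hugt
          (mnf_mem hBne) (mxf_mem hBne) hv hu).symm)
  have hjqd : jq ≤ d := by omega
  obtain ⟨C', hC', hjpC', hjqC'⟩ := sameQblock_of_rel hd hP hQ (by omega) (by omega)
    (by omega) hjqd hrel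
  have : C' = C := blk_unique hQ.1 hC' hC hjpC' (mxf_mem hCne)
  subst this
  have := le_mxf hjqC'
  omega

lemma arithSUa {d m j v : ℕ} (hm : 1 ≤ m) (hmj : m < j) (hj : j ≤ d)
    (hv1 : d - m < v) (hv2 : v ≤ d) :
    natBtw (2*d) (cpos d m) (opos v) (cpos d j) ∧
      natBtw (2*d) (cpos d j) (opos (d - m)) (cpos d m) := by
  unfold natBtw fm cpos opos; split_ifs <;> omega

/-- Surjectivity of the two labelling maps. -/
lemma target_surj {d : ℕ} {P Q : Finset (Finset ℕ)} (hd : 1 ≤ d) (hP : IsNC d P)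
    (hQ : IsSUComplement d P Q) {m : ℕ} (hm : m ≤ d) :
    (∃ B ∈ P, d - mxf B = m) ∨ (∃ C ∈ Q, mxf C = m) := by
  rcases Nat.eq_zero_or_pos m with rfl | hm1
  · obtain ⟨B, hB, hdB⟩ := blk_exists hP.1 hd le_rfl
    have h1 := le_mxf hdB
    have h2 := (blk_mem_Icc hP.1 hB (mxf_mem ⟨d, hdB⟩)).2
    exact Or.inl ⟨B, hB, by omega⟩
  · obtain ⟨C, hC, hmC⟩ := blk_exists hQ.1 hm1 hm
    have hCne : C.Nonempty := ⟨m, hmC⟩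
    have hmxC := blk_mem_Icc hQ.1 hC (mxf_mem hCne)
    rcases Nat.eq_or_lt_of_le (le_mxf hmC) with heq | hlt
    · exact Or.inr ⟨C, hC, heq.symm⟩
    · -- m is not the max of its Q-block
      set j := mxf C with hj
      have hrel : rel d P m j := rel_of_sameQblock hd hP hQ hC hmC (mxf_mem hCne)
      have hx1 : 1 ≤ d - m := by omega
      obtain ⟨Bx, hBx, hxBx⟩ := blk_exists hP.1 hx1 (by omega)
      have hBxne : Bx.Nonempty := ⟨_, hxBx⟩
      have hvmem := blk_mem_Icc hP.1 hBx (mxf_mem hBxne)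
      have hmx : mxf Bx = d - m := by
        rcases Nat.eq_or_lt_of_le (le_mxf hxBx) with heq2 | hlt2
        · exact heq2.symm
        · exfalso
          obtain ⟨w1, w2⟩ := arithSUa hm1 hlt hmxC.2 hlt2 hvmem.2
          exact hrel ⟨Bx, hBx, mxf Bx, mxf_mem hBxne, d - m, hxBx, w1, w2⟩
      exact Or.inl ⟨Bx, hBx, by omega⟩

/-- Kreweras-type block count: `|P| + |Q| = d + 1`. -/
lemma card_add_card {d : ℕ} {P Q : Finset (Finset ℕ)} (hd : 1 ≤ d) (hP : IsNC d P)
    (hQ : IsSUComplement d P Q) : P.card + Q.card = d + 1 := by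
  classical
  set SP := P.image (fun B => d - mxf B) with hSP
  set SQ := Q.image mxf with hSQ
  have hinjP : Set.InjOn (fun B => d - mxf B) P := by
    intro B1 h1 B2 h2 hh
    simp only at hh
    have hb1 := blk_mem_Icc hP.1 h1 (mxf_mem ((hP.1.1 B1 h1).2))
    have hb2 := blk_mem_Icc hP.1 h2 (mxf_mem ((hP.1.1 B2 h2).2))
    have : mxf B1 = mxf B2 := by omega
    exact blk_unique hP.1 h1 h2 (mxf_mem ((hP.1.1 B1 h1).2))
      (this ▸ mxf_mem ((hP.1.1 B2 h2).2))
  have hinjQ : Set.InjOn mxf Q := by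
    intro C1 h1 C2 h2 hh
    exact blk_unique hQ.1 h1 h2 (mxf_mem ((hQ.1.1 C1 h1).2))
      (hh ▸ mxf_mem ((hQ.1.1 C2 h2).2))
  have hdisj : Disjoint SP SQ := by
    rw [Finset.disjoint_left]
    rintro m hmP hmQ
    obtain ⟨B, hB, rfl⟩ := Finset.mem_image.1 hmP
    obtain ⟨C, hC, hCeq⟩ := Finset.mem_image.1 hmQ
    exact cross_ne hd hP hQ hB hC hCeq.symm
  have hunion : SP ∪ SQ = Finset.Icc 0 d := by
    ext m
    simp only [Finset.mem_union, hSP, hSQ, Finset.mem_image, Finset.mem_Icc]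
    constructor
    · rintro (⟨B, hB, rfl⟩ | ⟨C, hC, rfl⟩)
      · exact ⟨Nat.zero_le _, by omega⟩
      · exact ⟨Nat.zero_le _, (blk_mem_Icc hQ.1 hC (mxf_mem ((hQ.1.1 C hC).2))).2⟩
    · rintro ⟨-, hm⟩
      rcases target_surj hd hP hQ hm with ⟨B, hB, hh⟩ | ⟨C, hC, hh⟩
      · exact Or.inl ⟨B, hB, hh⟩
      · exact Or.inr ⟨C, hC, hh⟩
  have hcard : SP.card + SQ.card = d + 1 := by
    rw [← Finset.card_union_of_disjoint hdisj, hunion, Nat.card_Icc]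
    omega
  rw [hSP, hSQ] at hcard
  rw [Finset.card_image_of_injOn hinjP, Finset.card_image_of_injOn hinjQ] at hcard
  exact hcard
-- ===== statistics counting =====

lemma mxf_singleton (i : ℕ) : mxf {i} = i := by
  unfold mxf
  rw [dif_pos ⟨i, Finset.mem_singleton_self i⟩, Finset.max'_singleton]

lemma singIn_eq (X : Finset (Finset ℕ)) (U : Finset ℕ) :
    singIn X U = (U.filter fun i => {i} ∈ X).card := by
  classical
  unfold singIn
  refine Finset.card_bij' (fun B _ => mxf B) (fun i _ => {i}) ?_ ?_ ?_ ?_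
  · intro B hB
    obtain ⟨hBX, h1, hU⟩ := Finset.mem_filter.1 hB
    obtain ⟨b, rfl⟩ := Finset.card_eq_one.1 h1
    simp only [mxf_singleton]
    exact Finset.mem_filter.2 ⟨hU (Finset.mem_singleton_self b), hBX⟩
  · intro i hi
    obtain ⟨hiU, hiX⟩ := Finset.mem_filter.1 hi
    exact Finset.mem_filter.2 ⟨hiX, Finset.card_singleton i, Finset.singleton_subset_iff.2 hiU⟩
  · intro B hB
    obtain ⟨-, h1, -⟩ := Finset.mem_filter.1 hB
    obtain ⟨b, rfl⟩ := Finset.card_eq_one.1 h1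
    simp only [mxf_singleton]
  · intro i _
    simp only [mxf_singleton]

lemma card_split {d : ℕ} {X : Finset (Finset ℕ)} (hpart : IsPartitionOf d X) :
    X.card = blockCount X + singIn X (Finset.Icc 1 d) := by
  classical
  unfold blockCount singIn
  have h1 : (X.filter fun (B : Finset ℕ) => B.card = 1 ∧ B ⊆ Finset.Icc 1 d)
      = X.filter fun (B : Finset ℕ) => B.card = 1 := by
    refine Finset.filter_congr ?_
    intro B hB
    have := (hpart.1 B hB).1
    constructor
    · exact fun h => h.1
    · exact fun h => ⟨h, this⟩
  rw [h1]
  have h2 : (X.filter fun (B : Finset ℕ) => B.card = 1)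
      = X.filter fun (B : Finset ℕ) => ¬ (2 ≤ B.card) := by
    refine Finset.filter_congr ?_
    intro B hB
    have hne := (hpart.1 B hB).2
    have := Finset.card_pos.2 hne
    omega
  rw [h2]
  exact (Finset.card_filter_add_card_filter_not (fun (B : Finset ℕ) => 2 ≤ B.card)).symm

lemma antiIn_eq {d : ℕ} {X Y : Finset (Finset ℕ)}
    (hiff : ∀ a, 1 ≤ a → a ≤ d → ((∃ B ∈ Y, a ∈ B ∧ cyc d a ∈ B) ↔ {tau d a} ∈ X))
    {A : Finset ℕ} (hA : A ⊆ Finset.Icc 1 d) :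
    antiIn d Y A = ((A.image (tau d)).filter fun i => {i} ∈ X).card := by
  classical
  unfold antiIn
  rw [Finset.filter_image]
  rw [Finset.card_image_of_injOn]
  · congr 1
    refine Finset.filter_congr ?_
    intro a ha
    have had := Finset.mem_Icc.1 (hA ha)
    simpa using hiff a had.1 had.2
  · intro a ha b hb hab
    rw [Finset.mem_coe, Finset.mem_filter] at ha hb
    have had := Finset.mem_Icc.1 (hA ha.1)
    have hbd := Finset.mem_Icc.1 (hA hb.1)
    exact tau_injOn had.1 had.2 hbd.1 hbd.2 hab

lemma image_tau_full {d : ℕ} (hd : 1 ≤ d) :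
    (Finset.Icc 1 d).image (tau d) = Finset.Icc 1 d := by
  ext m
  simp only [Finset.mem_image, Finset.mem_Icc]
  constructor
  · rintro ⟨a, ha, rfl⟩
    unfold tau; split_ifs <;> omega
  · intro hm
    rcases Nat.eq_or_lt_of_le hm.2 with rfl | hlt
    · exact ⟨m, hm, by unfold tau; simp⟩
    · exact ⟨d - m, by omega, by unfold tau; split_ifs <;> omega⟩

lemma image_tau_interval {d k : ℕ} (hk1 : 1 ≤ k) (hk2 : k ≤ d) :
    (Finset.Icc (d + 1 - k) d \ {d}).image (tau d) = Finset.Icc 1 (k - 1) := by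
  ext m
  simp only [Finset.mem_image, Finset.mem_Icc, Finset.mem_sdiff, Finset.mem_singleton]
  constructor
  · rintro ⟨a, ⟨ha, had⟩, rfl⟩
    unfold tau; split_ifs <;> omega
  · intro hm
    exact ⟨d - m, by omega, by unfold tau; split_ifs <;> omega⟩

lemma filter_split_Icc {d k : ℕ} (hk1 : 1 ≤ k) (hk2 : k ≤ d) (p : ℕ → Prop)
    [DecidablePred p] :
    ((Finset.Icc k d).filter p).card + ((Finset.Icc 1 (k-1)).filter p).card =
      ((Finset.Icc 1 d).filter p).card := by
  classical
  have hdisj : Disjoint (Finset.Icc k d) (Finset.Icc 1 (k-1)) := by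
    rw [Finset.disjoint_left]
    intro a ha hb
    rw [Finset.mem_Icc] at ha hb
    omega
  have hunion : Finset.Icc k d ∪ Finset.Icc 1 (k-1) = Finset.Icc 1 d := by
    ext a
    simp only [Finset.mem_union, Finset.mem_Icc]
    omega
  rw [← Finset.card_union_of_disjoint (Finset.disjoint_filter_filter hdisj),
    ← Finset.filter_union, hunion]

/-- Middle case `1 ≤ k ≤ d`: half of the exponent identity. -/
lemma half_mid {d k : ℕ} {X Y : Finset (Finset ℕ)} (hk1 : 1 ≤ k) (hk2 : k ≤ d)
    (hiff : ∀ a, 1 ≤ a → a ≤ d → ((∃ B ∈ Y, a ∈ B ∧ cyc d a ∈ B) ↔ {tau d a} ∈ X)) :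
    singIn X (Finset.Icc k d) + antiIn d Y (Finset.Icc (d + 1 - k) d \ {d}) =
      singIn X (Finset.Icc 1 d) := by
  classical
  have hsub : Finset.Icc (d + 1 - k) d \ {d} ⊆ Finset.Icc 1 d := by
    intro a ha
    rw [Finset.mem_sdiff, Finset.mem_Icc, Finset.mem_singleton] at ha
    exact Finset.mem_Icc.2 ⟨by omega, ha.1.2⟩
  rw [singIn_eq, singIn_eq, antiIn_eq hiff hsub, image_tau_interval hk1 hk2]
  exact filter_split_Icc hk1 hk2 _

lemma half_full {d : ℕ} {X Y : Finset (Finset ℕ)} (hd : 1 ≤ d)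
    (hiff : ∀ a, 1 ≤ a → a ≤ d → ((∃ B ∈ Y, a ∈ B ∧ cyc d a ∈ B) ↔ {tau d a} ∈ X)) :
    antiIn d Y (Finset.Icc 1 d) = singIn X (Finset.Icc 1 d) := by
  classical
  rw [singIn_eq, antiIn_eq hiff (le_refl _), image_tau_full hd]

lemma antiIn_empty {d : ℕ} (Y : Finset (Finset ℕ)) : antiIn d Y ∅ = 0 := by
  unfold antiIn
  simp

lemma singIn_empty (X : Finset (Finset ℕ)) : singIn X ∅ = 0 := by
  unfold singIn
  rw [Finset.card_eq_zero, Finset.filter_eq_empty_iff]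
  rintro B _ ⟨h1, h2⟩
  have : B.Nonempty := Finset.card_pos.1 (by omega)
  obtain ⟨b, hb⟩ := this
  simpa using h2 hb
/-- Let `d ≥ 1`, `π ∈ NC(d)` and `0 ≤ k ≤ d+1`.  Then
`wt_k(π) · wt_{d+1-k}(α(π)) = x^{d+1}` in `ℚ[x]`. -/
theorem stmt13 (d k : ℕ) (hd : 1 ≤ d) (hk : k ≤ d + 1)
    (P Q : Finset (Finset ℕ)) (hP : IsNC d P) (hQ : IsSUComplement d P Q) :
    wtk d k P * wtk d (d + 1 - k) Q = X ^ (d + 1) := by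
  classical
  have hiffQX : ∀ a, 1 ≤ a → a ≤ d → ((∃ B ∈ Q, a ∈ B ∧ cyc d a ∈ B) ↔ {tau d a} ∈ P) :=
    fun a h1 h2 => anti_Q_iff_sing_P hd hP hQ h1 h2
  have hiffPX : ∀ a, 1 ≤ a → a ≤ d → ((∃ B ∈ P, a ∈ B ∧ cyc d a ∈ B) ↔ {tau d a} ∈ Q) :=
    fun a h1 h2 => anti_P_iff_sing_Q hd hP hQ h1 h2
  have hsplitP : P.card = blockCount P + singIn P (Finset.Icc 1 d) := card_split hP.1
  have hsplitQ : Q.card = blockCount Q + singIn Q (Finset.Icc 1 d) := card_split hQ.1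
  have hF1 : P.card + Q.card = d + 1 := card_add_card hd hP hQ
  rcases Nat.eq_zero_or_pos k with rfl | hk1
  · -- k = 0
    have h2 : d + 1 - 0 = d + 1 := by omega
    rw [h2]
    have hw1 : wtk d 0 P = wt d P (Finset.Icc 1 d) (Finset.Icc 1 d) := by
      unfold wtk; rw [if_pos rfl]
    have hw2 : wtk d (d + 1) Q = wt d Q ∅ ∅ := by
      unfold wtk; rw [if_neg (by omega), if_neg (by omega)]
    rw [hw1, hw2]
    unfold wt
    rw [← pow_add]
    congr 1
    have hfull : antiIn d P (Finset.Icc 1 d) = singIn Q (Finset.Icc 1 d) :=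
      half_full hd hiffPX
    rw [antiIn_empty, singIn_empty, hfull]
    omega
  · rcases Nat.lt_or_ge d k with hkd | hkd
    · -- k = d + 1
      have hkk : k = d + 1 := by omega
      subst hkk
      have h2 : d + 1 - (d + 1) = 0 := by omega
      rw [h2]
      have hw1 : wtk d (d + 1) P = wt d P ∅ ∅ := by
        unfold wtk; rw [if_neg (by omega), if_neg (by omega)]
      have hw2 : wtk d 0 Q = wt d Q (Finset.Icc 1 d) (Finset.Icc 1 d) := by
        unfold wtk; rw [if_pos rfl]
      rw [hw1, hw2]
      unfold wt
      rw [← pow_add]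
      congr 1
      have hfull : antiIn d Q (Finset.Icc 1 d) = singIn P (Finset.Icc 1 d) :=
        half_full hd hiffQX
      rw [antiIn_empty, singIn_empty, hfull]
      omega
    · -- 1 ≤ k ≤ d
      set k' := d + 1 - k with hk'
      have hk'1 : 1 ≤ k' := by omega
      have hk'2 : k' ≤ d := by omega
      have hw1 : wtk d k P = wt d P (Finset.Icc k d) (Finset.Icc k d \ {d}) := by
        unfold wtk; rw [if_neg (by omega), if_pos hkd]
      have hw2 : wtk d k' Q = wt d Q (Finset.Icc k' d) (Finset.Icc k' d \ {d}) := by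
        unfold wtk; rw [if_neg (by omega), if_pos hk'2]
      rw [hw1, hw2]
      unfold wt
      rw [← pow_add]
      congr 1
      have hh1 : singIn P (Finset.Icc k d) + antiIn d Q (Finset.Icc (d + 1 - k) d \ {d}) =
          singIn P (Finset.Icc 1 d) := half_mid hk1 hkd hiffQX
      have hh2 : singIn Q (Finset.Icc k' d) + antiIn d P (Finset.Icc (d + 1 - k') d \ {d}) =
          singIn Q (Finset.Icc 1 d) := half_mid hk'1 hk'2 hiffPX
      have hkk' : d + 1 - k' = k := by omega
      rw [hkk'] at hh2
      have hkid : d + 1 - k = k' := rfl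
      rw [hkid] at hh1
      omega
end

section
/- The operation β sending a family S of pairwise disjoint cyclic intervals of [d] in standard form to S' is an involution: for every such family S (including S = ∅ and S = [1,d]^*), applying the transformation twice returns S, i.e., (S')' = S. -/
open Finset Polynomial
open scoped BigOperators

lemma dual_length (d : ℕ) (L : List (ℕ × ℕ)) : (dualFam d L).length = L.length := by
  simp [dualFam]

lemma dual_getD (d : ℕ) (L : List (ℕ × ℕ)) (t : ℕ) (ht : t < L.length) :
    (dualFam d L).getD t (0, 0) =
      (d - nthK L (L.length - 1 - t) + 1,
       d - (nthL L ((2 * L.length - 2 - t) % L.length)) % d) := by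
  rw [List.getD_eq_getElem _ _ (by simpa [dual_length] using ht)]
  simp [dualFam]

lemma nthK_dual (d : ℕ) (L : List (ℕ × ℕ)) (t : ℕ) (ht : t < L.length) :
    nthK (dualFam d L) t = d - nthK L (L.length - 1 - t) + 1 := by
  rw [nthK, dual_getD d L t ht]

lemma nthL_dual (d : ℕ) (L : List (ℕ × ℕ)) (t : ℕ) (ht : t < L.length) :
    nthL (dualFam d L) t = d - (nthL L ((2 * L.length - 2 - t) % L.length)) % d := by
  rw [nthL, dual_getD d L t ht]

lemma mod_invol (n i : ℕ) (hn : 1 ≤ n) (hi : i < n) :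
    (2 * n - 2 - ((2 * n - 2 - i) % n)) % n = i := by
  rcases Nat.lt_or_ge (i + 1) n with h | h
  · have h1 : 2 * n - 2 - i = n + (n - 2 - i) := by omega
    have hm1 : (n - 2 - i) % n = n - 2 - i := Nat.mod_eq_of_lt (by omega)
    rw [h1, Nat.add_mod_left, hm1]
    have h2 : 2 * n - 2 - (n - 2 - i) = n + i := by omega
    rw [h2, Nat.add_mod_left, Nat.mod_eq_of_lt hi]
  · have hi' : i = n - 1 := by omega
    have h1 : 2 * n - 2 - i = n - 1 := by omega
    have hm1 : (n - 1) % n = n - 1 := Nat.mod_eq_of_lt (by omega)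
    have h2 : 2 * n - 2 - (n - 1) = n - 1 := by omega
    rw [h1, hm1, h2, hm1]
    omega

lemma cflip (d l : ℕ) (h1 : 1 ≤ l) (h2 : l ≤ d) : d - (d - l % d) % d = l := by
  rcases eq_or_lt_of_le h2 with h | h
  · subst h; simp
  · rw [Nat.mod_eq_of_lt h, Nat.mod_eq_of_lt (by omega)]; omega

lemma dd_eq (d : ℕ) (hd : 1 ≤ d) (L : List (ℕ × ℕ)) (hL : StandardForm d L) :
    dualFam d (dualFam d L) = L := by
  obtain ⟨hne, hk0, hkn, hmid, hlast⟩ := hL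
  set n := L.length with hn_def
  have hn : 1 ≤ n := List.length_pos_iff.mpr hne
  -- monotonicity of left endpoints
  have hmono : ∀ t, t < n → nthK L t ≤ nthK L (n - 1) := by
    intro t ht
    have : ∀ m, m < n → nthK L (n - 1 - m) ≤ nthK L (n - 1) := by
      intro m
      induction m with
      | zero => intro _; simp
      | succ m ih =>
        intro hm
        have h1 : n - 1 - (m + 1) + 1 = n - 1 - m := by omega
        have h2 : (n - 1 - (m + 1)) + 1 < n := by omega
        refine le_of_lt ?_
        calc nthK L (n - 1 - (m + 1)) ≤ nthL L (n - 1 - (m + 1)) := (hmid _ h2).1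
          _ < nthK L (n - 1 - (m + 1) + 1) := (hmid _ h2).2
          _ = nthK L (n - 1 - m) := by rw [h1]
          _ ≤ nthK L (n - 1) := ih (by omega)
    have := this (n - 1 - t) (by omega)
    have he : n - 1 - (n - 1 - t) = t := by omega
    rwa [he] at this
  have hmono0 : ∀ t, t < n → 1 ≤ nthK L t := by
    intro t ht
    have : ∀ m, m < n → nthK L 0 ≤ nthK L m := by
      intro m
      induction m with
      | zero => intro _; exact le_refl _
      | succ m ih =>
        intro hm
        calc nthK L 0 ≤ nthK L m := ih (by omega)
          _ ≤ nthL L m := (hmid _ hm).1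
          _ ≤ nthK L (m + 1) := le_of_lt (hmid _ hm).2
    exact hk0.trans (this t ht)
  have hkbound : ∀ t, t < n → 1 ≤ nthK L t ∧ nthK L t ≤ d :=
    fun t ht => ⟨hmono0 t ht, le_trans (hmono t ht) hkn⟩
  have hlbound : ∀ t, t < n → 1 ≤ nthL L t ∧ nthL L t ≤ d := by
    intro t ht
    rcases Nat.lt_or_ge (t + 1) n with h | h
    · refine ⟨le_trans (hmono0 t ht) (hmid t h).1, ?_⟩
      exact le_trans (le_of_lt (hmid t h).2) (hkbound (t+1) h).2
    · have ht' : t = n - 1 := by omega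
      subst ht'
      rcases hlast with ⟨h1, h2⟩ | ⟨h1, h2⟩
      · exact ⟨le_trans (hmono0 _ ht) h1, h2⟩
      · exact ⟨h1, le_trans (le_of_lt h2) (le_trans (hmono 0 (by omega)) hkn)⟩
  -- now prove the list equality
  apply List.ext_getElem
  · rw [dual_length, dual_length]
  · intro i h1 h2
    have hi : i < n := h2
    have hiD : i < (dualFam d L).length := by rw [dual_length]; exact hi
    have hgD : ((dualFam d (dualFam d L))).getD i (0,0) = (dualFam d (dualFam d L))[i] := by
      rw [List.getD_eq_getElem]
    have hgL : L.getD i (0,0) = L[i] := List.getD_eq_getElem _ _ hi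
    rw [← hgD, ← hgL]
    have hK : nthK (dualFam d (dualFam d L)) i = nthK L i := by
      rw [nthK_dual d _ i (by simpa [dual_length] using hi)]
      rw [dual_length]
      rw [nthK_dual d L (n - 1 - i) (by omega)]
      have he : n - 1 - (n - 1 - i) = i := by omega
      rw [he]
      have := hkbound i hi
      omega
    have hLc : nthL (dualFam d (dualFam d L)) i = nthL L i := by
      rw [nthL_dual d _ i (by simpa [dual_length] using hi)]
      rw [dual_length]
      set j := (2 * n - 2 - i) % n with hj_def
      have hjn : j < n := Nat.mod_lt _ (by omega)
      rw [nthL_dual d L j hjn]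
      rw [mod_invol n i hn hi]
      exact cflip d _ (hlbound i hi).1 (hlbound i hi).2
    have := Prod.ext hK hLc
    simpa [nthK, nthL, hgD, hgL] using this

/-- The operation `β : S ↦ S'` on families of pairwise disjoint cyclic
intervals of `[d]` in standard form (including `S = ∅` and `S = [1,d]^*`) is an
involution: `(S')' = S`. -/
theorem stmt16 (d : ℕ) (hd : 1 ≤ d) (S : Fam) (hS : FamStd d S) :
    famDual d (famDual d S) = S := by
  cases S with
  | empty => rfl
  | full => rfl
  | fam L => simp only [famDual]; rw [dd_eq d hd L hS]
end

section
/- Let S be a family of i ≥ 1 pairwise disjoint cyclic intervals of [d] in standard form whose intervals contain d−j elements of [d] in total. Then S' is a family of i pairwise disjoint cyclic intervals of [d] whose intervals contain i+j elements of [d] in total. -/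
open Finset Polynomial
open scoped BigOperators

section Stmt17Aux

lemma mem_cyclicInterval {d k l x : ℕ} :
    x ∈ cyclicInterval d k l ↔
      (k ≤ l ∧ k ≤ x ∧ x ≤ l) ∨ (l < k ∧ (k ≤ x ∧ x ≤ d ∨ 1 ≤ x ∧ x ≤ l)) := by
  unfold cyclicInterval
  split_ifs with h <;> simp [Finset.mem_Icc, Finset.mem_union] <;> omega

lemma card_CI_nowrap {d k l : ℕ} (h : k ≤ l) :
    (cyclicInterval d k l).card = l + 1 - k := by
  rw [cyclicInterval, if_pos h, Nat.card_Icc]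

lemma card_CI_wrap {d k l : ℕ} (h : l < k) (h1 : 1 ≤ l) (h2 : k ≤ d) :
    (cyclicInterval d k l).card = d + 1 - k + l := by
  rw [cyclicInterval, if_neg (by omega), Finset.card_union_of_disjoint, Nat.card_Icc,
    Nat.card_Icc]
  · omega
  · rw [Finset.disjoint_left]
    intro x hx hx'
    simp only [Finset.mem_Icc] at hx hx'
    omega

lemma CI_disjoint {d a b a' b' : ℕ} (h1 : a ≤ b) (h2 : b < a') (h3 : b' < a ∨ a' ≤ b') :
    Disjoint (cyclicInterval d a b) (cyclicInterval d a' b') := by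
  rw [Finset.disjoint_left]
  intro x hx hx'
  rw [mem_cyclicInterval] at hx hx'
  omega

end Stmt17Aux

/-- Let `S` be a family of `i ≥ 1` pairwise disjoint cyclic intervals
of `[d]` in standard form containing `d-j` elements of `[d]` in total.  Then `S'` is a
family of `i` pairwise disjoint cyclic intervals of `[d]` containing `i+j` elements of
`[d]` in total. -/
theorem stmt17 (d i j : ℕ) (hd : 1 ≤ d) (L : List (ℕ × ℕ)) (hL : StandardForm d L)
    (hi : L.length = i) (hjd : j ≤ d)
    (hj : (L.map fun p => (cyclicInterval d p.1 p.2).card).sum = d - j) :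
    (dualFam d L).length = i ∧
    (∀ p ∈ dualFam d L, 1 ≤ p.1 ∧ p.1 ≤ d ∧ 1 ≤ p.2 ∧ p.2 ≤ d) ∧
    List.Pairwise
      (fun p q => Disjoint (cyclicInterval d p.1 p.2) (cyclicInterval d q.1 q.2))
      (dualFam d L) ∧
    ((dualFam d L).map fun p => (cyclicInterval d p.1 p.2).card).sum = i + j := by
  subst hi
  obtain ⟨hne, hk1, hkd, hstep, hlast⟩ := hL
  have hn1 : 1 ≤ L.length := List.length_pos_iff.mpr hne
  have hchain : ∀ v, v + 1 < L.length → ∀ u, u ≤ v → nthK L u ≤ nthL L v := by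
    intro v
    induction v with
    | zero =>
      intro hv u hu
      have h0 : u = 0 := by omega
      subst h0
      exact (hstep 0 hv).1
    | succ v ih =>
      intro hv u hu
      have h1 := (hstep (v + 1) hv).1
      by_cases h : u = v + 1
      · subst h; exact h1
      · have h2 := ih (by omega) u (by omega)
        have h3 := (hstep v (by omega)).2
        omega
  have hmono : ∀ u v, u ≤ v → v < L.length → nthK L u ≤ nthK L v := by
    intro u v huv hv
    rcases Nat.eq_or_lt_of_le huv with rfl | h
    · exact le_refl _
    · have h1 := hchain (v - 1) (by omega) u (by omega)
      have h2 := (hstep (v - 1) (by omega)).2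
      have h3 : v - 1 + 1 = v := by omega
      rw [h3] at h2
      omega
  have hKd' : ∀ t, t < L.length → nthK L t ≤ d := fun t ht =>
    le_trans (hmono t (L.length - 1) (by omega) (by omega)) hkd
  have hK1' : ∀ t, t < L.length → 1 ≤ nthK L t := fun t ht =>
    le_trans hk1 (hmono 0 t (by omega) ht)
  have hLld : ∀ t, t + 1 < L.length → nthL L t < d := fun t ht =>
    lt_of_lt_of_le (hstep t ht).2 (hKd' (t + 1) ht)
  have hdual : dualFam d L = (List.range L.length).map (fun t =>
      (d - nthK L (L.length - 1 - t) + 1,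
       d - (nthL L ((2 * L.length - 2 - t) % L.length)) % d)) := rfl
  have hidx : ∀ t, t < L.length - 1 →
      (2 * L.length - 2 - t) % L.length = L.length - 2 - t := by
    intro t ht
    have h1 : 2 * L.length - 2 - t = L.length + (L.length - 2 - t) := by omega
    rw [h1, Nat.add_mod_left, Nat.mod_eq_of_lt (by omega)]
  have hidxm : (2 * L.length - 2 - (L.length - 1)) % L.length = L.length - 1 := by
    have h1 : 2 * L.length - 2 - (L.length - 1) = L.length - 1 := by omega
    rw [h1, Nat.mod_eq_of_lt (by omega)]
  refine ⟨by simp [hdual], ?_, ?_, ?_⟩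
  · -- bounds
    intro p hp
    rw [hdual, List.mem_map] at hp
    obtain ⟨t, ht, rfl⟩ := hp
    rw [List.mem_range] at ht
    have h1 : 1 ≤ nthK L (L.length - 1 - t) := hK1' _ (by omega)
    have h2 : nthK L (L.length - 1 - t) ≤ d := hKd' _ (by omega)
    have h3 : (nthL L ((2 * L.length - 2 - t) % L.length)) % d < d :=
      Nat.mod_lt _ (by omega)
    exact ⟨by omega, by omega, by omega, by omega⟩
  · -- pairwise disjoint
    rw [hdual, List.pairwise_iff_getElem]
    intro s t hs ht hst
    simp only [List.length_map, List.length_range] at hs ht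
    simp only [List.getElem_map, List.getElem_range]
    have hsm : s < L.length - 1 := by omega
    rw [hidx s hsm]
    rw [Nat.mod_eq_of_lt (hLld (L.length - 2 - s) (by omega))]
    have f1 : nthL L (L.length - 2 - s) < nthK L (L.length - 1 - s) := by
      have h := (hstep (L.length - 2 - s) (by omega)).2
      have e : L.length - 2 - s + 1 = L.length - 1 - s := by omega
      rwa [e] at h
    have f2 : nthK L (L.length - 1 - s) ≤ d := hKd' _ (by omega)
    have f3 : nthK L (L.length - 1 - t) ≤ nthL L (L.length - 2 - s) :=
      hchain (L.length - 2 - s) (by omega) _ (by omega)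
    by_cases htm : t = L.length - 1
    · subst htm
      rw [hidxm, Nat.sub_self] at *
      have hK0d : nthK L 0 ≤ d := hKd' 0 (by omega)
      have hK01 : 1 ≤ nthK L 0 := hK1' 0 (by omega)
      rcases hlast with ⟨hA1, hA2⟩ | ⟨hB1, hB2⟩
      · by_cases hld : nthL L (L.length - 1) = d
        · rw [hld, Nat.mod_self]
          exact CI_disjoint (by omega) (by omega) (Or.inr (by omega))
        · rw [Nat.mod_eq_of_lt (by omega)]
          have f4 : nthK L (L.length - 1 - s) ≤ nthL L (L.length - 1) :=
            le_trans (hmono _ (L.length - 1) (by omega) (by omega)) hA1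
          exact CI_disjoint (by omega) (by omega) (Or.inl (by omega))
      · rw [Nat.mod_eq_of_lt (by omega)]
        exact CI_disjoint (by omega) (by omega) (Or.inr (by omega))
    · have htm' : t < L.length - 1 := by omega
      rw [hidx t htm']
      rw [Nat.mod_eq_of_lt (hLld (L.length - 2 - t) (by omega))]
      have f4 : nthL L (L.length - 2 - t) < nthK L (L.length - 1 - t) := by
        have h := (hstep (L.length - 2 - t) (by omega)).2
        have e : L.length - 2 - t + 1 = L.length - 1 - t := by omega
        rwa [e] at h
      have f5 : nthK L (L.length - 1 - t) ≤ d := hKd' _ (by omega)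
      exact CI_disjoint (by omega) (by omega) (Or.inr (by omega))
  · -- the sum
    have hLrep : L = (List.range L.length).map (fun t => L.getD t (0, 0)) := by
      apply List.ext_getElem
      · simp
      · intro t h1 h2
        simp [List.getD_eq_getElem?_getD, List.getElem?_eq_getElem h1]
    rw [hLrep] at hj
    rw [List.map_map] at hj
    have hOrig : ∑ t ∈ Finset.range L.length,
        (cyclicInterval d (nthK L t) (nthL L t)).card = d - j := hj
    have hDual : ((dualFam d L).map fun p => (cyclicInterval d p.1 p.2).card).sum
        = ∑ t ∈ Finset.range L.length,
          (cyclicInterval d (d - nthK L (L.length - 1 - t) + 1)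
            (d - (nthL L ((2 * L.length - 2 - t) % L.length)) % d)).card := by
      rw [hdual, List.map_map]
      rfl
    rw [hDual]
    obtain ⟨m, hm⟩ : ∃ m, L.length = m + 1 := ⟨L.length - 1, by omega⟩
    rw [hm] at hOrig hstep hlast hchain hmono hKd' hK1' hLld ⊢
    simp only [Nat.add_sub_cancel] at hlast ⊢
    rw [Finset.sum_range_succ] at hOrig
    rw [Finset.sum_range_succ, Nat.sub_self]
    have eidx : 2 * (m + 1) - 2 - m = m := by omega
    rw [eidx, Nat.mod_eq_of_lt (by omega : m < m + 1)]
    -- rewrite the first m dual cards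
    have hterm : ∀ t ∈ Finset.range m,
        (cyclicInterval d (d - nthK L (m - t) + 1)
          (d - (nthL L ((2 * (m + 1) - 2 - t) % (m + 1))) % d)).card
        = nthK L (m - t) - nthL L (m - 1 - t) := by
      intro t ht
      rw [Finset.mem_range] at ht
      have e1 : 2 * (m + 1) - 2 - t = (m + 1) + (m - 1 - t) := by omega
      rw [e1, Nat.add_mod_left, Nat.mod_eq_of_lt (show m - 1 - t < m + 1 by omega)]
      have e2 : nthL L (m - 1 - t) < d := hLld _ (by omega)
      rw [Nat.mod_eq_of_lt e2]
      have e3 : nthL L (m - 1 - t) < nthK L (m - t) := by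
        have h := (hstep (m - 1 - t) (by omega)).2
        have e : m - 1 - t + 1 = m - t := by omega
        rwa [e] at h
      have e4 : nthK L (m - t) ≤ d := hKd' _ (by omega)
      rw [card_CI_nowrap (by omega)]
      omega
    rw [Finset.sum_congr rfl hterm]
    -- cast the first m dual cards to ℤ and telescope
    have hcast : ∀ t ∈ Finset.range m,
        ((nthK L (m - t) - nthL L (m - 1 - t) : ℕ) : ℤ)
          = (nthK L (m - t) : ℤ) - nthL L (m - 1 - t) := by
      intro t ht
      rw [Finset.mem_range] at ht
      have e3 : nthL L (m - 1 - t) < nthK L (m - t) := by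
        have h := (hstep (m - 1 - t) (by omega)).2
        have e : m - 1 - t + 1 = m - t := by omega
        rwa [e] at h
      omega
    have hOc : ∀ t ∈ Finset.range m,
        ((cyclicInterval d (nthK L t) (nthL L t)).card : ℤ)
          = (nthL L t : ℤ) - nthK L t + 1 := by
      intro t ht
      rw [Finset.mem_range] at ht
      have h1 := (hstep t (by omega)).1
      rw [card_CI_nowrap h1]
      omega
    have hT : ∑ t ∈ Finset.range m, ((nthK L t : ℤ) - nthL L t)
        = (m : ℤ) - ∑ t ∈ Finset.range m,
            ((cyclicInterval d (nthK L t) (nthL L t)).card : ℤ) := by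
      have h1 : ∀ t ∈ Finset.range m, ((nthK L t : ℤ) - nthL L t)
          = 1 - ((cyclicInterval d (nthK L t) (nthL L t)).card : ℤ) := by
        intro t ht
        have := hOc t ht
        omega
      rw [Finset.sum_congr rfl h1, Finset.sum_sub_distrib]
      simp
    have href : ∑ t ∈ Finset.range m, ((nthK L (m - t) : ℤ) - nthL L (m - 1 - t))
        = ∑ t ∈ Finset.range m, ((nthK L (t + 1) : ℤ) - nthL L t) := by
      rw [← Finset.sum_range_reflect (fun t => (nthK L (t + 1) : ℤ) - nthL L t) m]
      apply Finset.sum_congr rfl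
      intro t ht
      rw [Finset.mem_range] at ht
      have e : m - 1 - t + 1 = m - t := by omega
      rw [e]
    have hsplit : ∀ t ∈ Finset.range m, ((nthK L (t + 1) : ℤ) - nthL L t)
        = ((nthK L (t + 1) : ℤ) - nthK L t) + ((nthK L t : ℤ) - nthL L t) := by
      intro t _
      ring
    have hMain : ((∑ t ∈ Finset.range m, (nthK L (m - t) - nthL L (m - 1 - t)) : ℕ) : ℤ)
        = (nthK L m : ℤ) - nthK L 0 + ((m : ℤ) - ((∑ t ∈ Finset.range m,
            (cyclicInterval d (nthK L t) (nthL L t)).card : ℕ) : ℤ)) := by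
      push_cast
      rw [Finset.sum_congr rfl hcast, href, Finset.sum_congr rfl hsplit,
        Finset.sum_add_distrib, Finset.sum_range_sub (fun t => (nthK L t : ℤ)), hT]
    -- now handle the last dual card by cases
    have hK0d : nthK L 0 ≤ d := hKd' 0 (by omega)
    have hK01 : 1 ≤ nthK L 0 := hK1' 0 (by omega)
    have hKmd : nthK L m ≤ d := hKd' m (by omega)
    rcases hlast with ⟨hA1, hA2⟩ | ⟨hB1, hB2⟩
    · have hcA : ((cyclicInterval d (d - nthK L 0 + 1) (d - nthL L m % d)).card : ℤ)
          = (nthK L 0 : ℤ) + ((d : ℤ) - nthL L m) := by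
        by_cases hld : nthL L m = d
        · rw [hld, Nat.mod_self, card_CI_nowrap (by omega)]
          omega
        · rw [Nat.mod_eq_of_lt (by omega)]
          have hK0Ll : nthK L 0 ≤ nthL L m := by
            by_cases hm0 : m = 0
            · subst hm0
              exact le_trans (le_refl _) hA1
            · have h1 := hchain (m - 1) (by omega) 0 (by omega)
              have h2 := (hstep (m - 1) (by omega)).2
              have e : m - 1 + 1 = m := by omega
              rw [e] at h2
              omega
          rw [card_CI_wrap (by omega) (by omega) (by omega)]
          omega
      have hOcm : ((cyclicInterval d (nthK L m) (nthL L m)).card : ℤ)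
          = (nthL L m : ℤ) - nthK L m + 1 := by
        rw [card_CI_nowrap hA1]
        omega
      omega
    · have hLlmd : nthL L m < d := by omega
      have hcB : ((cyclicInterval d (d - nthK L 0 + 1) (d - nthL L m % d)).card : ℤ)
          = (nthK L 0 : ℤ) - nthL L m := by
        rw [Nat.mod_eq_of_lt hLlmd, card_CI_nowrap (by omega)]
        omega
      have hKmLlm : nthL L m < nthK L m := lt_of_lt_of_le hB2 (hmono 0 m (by omega) (by omega))
      have hOcm : ((cyclicInterval d (nthK L m) (nthL L m)).card : ℤ)
          = (d : ℤ) + 1 - nthK L m + nthL L m := by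
        rw [card_CI_wrap hKmLlm hB1 hKmd]
        omega
      omega
end
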